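/- In a simple arrangement of lines in the real plane, no two triangular bounded cells share a common edge; that is, there do not exist two distinct bounded cells, both triangles, whose closures intersect in a nondegenerate segment. -/

import Mathlib

/-!
The common segment lies in the union of the lines (a point of it off the lines would lie in both
open cells), hence on a single line `ℓ` of the arrangement.

If both cells lie on the same side of `ℓ`, pick a point of the segment on no other line: near it
the only line is `ℓ`, so points of the two cells close to it are joined by a segment missing all
lines, and the cells coincide.

If they lie on opposite sides, both triangles have an edge on `ℓ` containing the segment, with
apices `P` and `Q` off `ℓ`. A vertex of one triangle cannot lie strictly inside the `ℓ`-edge of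
the other: the line of the arrangement through that vertex and its apex would cut the other cell.
So the two `ℓ`-edges are the same segment `AB`. Only two lines of a simple arrangement pass
through `A`, so the lines `AP` and `AQ` coincide; likewise `BP` and `BQ`. Then the line `PQ`
contains `A` and `B`, so it is `ℓ`, which is absurd.
-/

open Set

/-- A line in the real plane `ℝ × ℝ`, given by the equation `a*x + b*y = c`
with `(a, b) ≠ (0, 0)`. -/
structure Line2 where
  a : ℝ
  b : ℝ
  c : ℝ
  nondeg : (a, b) ≠ (0, 0)

/-- The set of points of a line. -/
def Line2.carrier (ℓ : Line2) : Set (ℝ × ℝ) :=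
  {p | ℓ.a * p.1 + ℓ.b * p.2 = ℓ.c}

/-- Two lines are parallel if their normal vectors are proportional
(this includes the case of equal lines). -/
def Line2.Parallel (ℓ₁ ℓ₂ : Line2) : Prop :=
  ℓ₁.a * ℓ₂.b = ℓ₂.a * ℓ₁.b

/-- A simple arrangement: a finite set of lines, pairwise non-parallel,
no point on three (or more) of the lines. -/
def IsSimpleArrangement (L : Finset Line2) : Prop :=
  (∀ ℓ₁ ∈ L, ∀ ℓ₂ ∈ L, ℓ₁ ≠ ℓ₂ → ¬ Line2.Parallel ℓ₁ ℓ₂) ∧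
  (∀ ℓ₁ ∈ L, ∀ ℓ₂ ∈ L, ∀ ℓ₃ ∈ L, ℓ₁ ≠ ℓ₂ → ℓ₁ ≠ ℓ₃ → ℓ₂ ≠ ℓ₃ →
    ∀ p : ℝ × ℝ, ¬(p ∈ ℓ₁.carrier ∧ p ∈ ℓ₂.carrier ∧ p ∈ ℓ₃.carrier))

/-- The union of the lines of an arrangement. -/
def linesUnion (L : Finset Line2) : Set (ℝ × ℝ) := ⋃ ℓ ∈ L, ℓ.carrier

/-- A cell of the arrangement determined by a closed set `S` of "forbidden" points:
a connected component of the complement of `S`. -/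
def IsCellOf (S : Set (ℝ × ℝ)) (C : Set (ℝ × ℝ)) : Prop :=
  ∃ x, x ∉ S ∧ C = connectedComponentIn Sᶜ x

/-- A cell of a line arrangement: a connected component of the complement of the
union of the lines. -/
def IsCell (L : Finset Line2) (C : Set (ℝ × ℝ)) : Prop :=
  IsCellOf (linesUnion L) C

/-- A set is a (closed, nondegenerate) triangle. -/
def IsTriangleSet (T : Set (ℝ × ℝ)) : Prop :=
  ∃ u v w : ℝ × ℝ, ¬ Collinear ℝ ({u, v, w} : Set (ℝ × ℝ)) ∧
    T = convexHull ℝ ({u, v, w} : Set (ℝ × ℝ))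

/-- An edge of (the closure of) a polygonal region `P`: a maximal nondegenerate
segment contained in the frontier of `P`. -/
def IsEdge (P : Set (ℝ × ℝ)) (e : Set (ℝ × ℝ)) : Prop :=
  ∃ x y : ℝ × ℝ, x ≠ y ∧ e = segment ℝ x y ∧ e ⊆ frontier P ∧
    ∀ x' y' : ℝ × ℝ, e ⊆ segment ℝ x' y' → segment ℝ x' y' ⊆ frontier P →
      segment ℝ x' y' = e

open AffineMap (lineMap)

section AffineFunctional

variable {V : Type*} [AddCommGroup V] [Module ℝ V]

lemma collinear_of_forall_eq_zero [FiniteDimensional ℝ V] (hV : Module.finrank ℝ V = 2)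
    {f : V →ᵃ[ℝ] ℝ} (hf : f.linear ≠ 0) {s : Set V} (hs : ∀ p ∈ s, f p = 0) :
    Collinear ℝ s := by
  have hker : Module.finrank ℝ (LinearMap.ker f.linear) = 1 := by
    have := f.linear.finrank_range_add_finrank_ker
    rw [LinearMap.range_eq_top.2 (LinearMap.surjective_of_ne_zero hf), finrank_top,
      Module.finrank_self, hV] at this
    omega
  have hspan : vectorSpan ℝ s ≤ LinearMap.ker f.linear := by
    refine Submodule.span_le.2 ?_
    rintro _ ⟨p, hp, q, hq, rfl⟩
    rw [SetLike.mem_coe, LinearMap.mem_ker, AffineMap.linearMap_vsub, hs p hp, hs q hq, vsub_self]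
  rw [collinear_iff_finrank_le_one]
  exact hker ▸ Submodule.finrank_mono hspan

lemma eq_of_mem_segment_of_apply_eq_zero {f : V →ᵃ[ℝ] ℝ} {p q z : V} (hp : 0 < f p)
    (hq : 0 ≤ f q) (hz : z ∈ segment ℝ p q) (hfz : f z = 0) : z = q := by
  obtain ⟨a, b, ha, hb, hab, rfl⟩ := hz
  rw [Convex.combo_affine_apply hab, smul_eq_mul, smul_eq_mul] at hfz
  obtain rfl : a = 0 := by nlinarith [mul_nonneg hb hq]
  simp [show b = 1 by linarith]

lemma mem_segment_of_mem_convexHull_of_apply_eq_zero {f : V →ᵃ[ℝ] ℝ} {p a b z : V}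
    (hp : 0 < f p) (ha : 0 ≤ f a) (hb : 0 ≤ f b) (hz : z ∈ convexHull ℝ {p, a, b})
    (hfz : f z = 0) : z ∈ segment ℝ a b := by
  rw [convexHull_insert (insert_nonempty _ _), convexHull_pair, mem_convexJoin] at hz
  obtain ⟨_, rfl, m, hm, hzm⟩ := hz
  have hfm : 0 ≤ f m := ((convex_Ici 0).affine_preimage f).segment_subset ha hb hm
  exact eq_of_mem_segment_of_apply_eq_zero hp hfm hzm hfz ▸ hm

lemma apex_of_two_zeros {f : V →ᵃ[ℝ] ℝ} {u v w x y : V} (hu : 0 < f u) (hv : 0 ≤ f v)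
    (hw : 0 ≤ f w) (hx : x ∈ convexHull ℝ {u, v, w}) (hy : y ∈ convexHull ℝ {u, v, w}) (hxy : x ≠ y)
    (hfx : f x = 0) (hfy : f y = 0) :
    f v = 0 ∧ f w = 0 ∧ x ∈ segment ℝ v w ∧ y ∈ segment ℝ v w := by
  have hxs := mem_segment_of_mem_convexHull_of_apply_eq_zero hu hv hw hx hfx
  have hys := mem_segment_of_mem_convexHull_of_apply_eq_zero hu hv hw hy hfy
  refine ⟨?_, ?_, hxs, hys⟩
  · by_contra h
    have hv' := lt_of_le_of_ne hv (Ne.symm h)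
    exact hxy ((eq_of_mem_segment_of_apply_eq_zero hv' hw hxs hfx).trans
      (eq_of_mem_segment_of_apply_eq_zero hv' hw hys hfy).symm)
  · by_contra h
    have hw' := lt_of_le_of_ne hw (Ne.symm h)
    rw [segment_symm] at hxs hys
    exact hxy ((eq_of_mem_segment_of_apply_eq_zero hw' hv hxs hfx).trans
      (eq_of_mem_segment_of_apply_eq_zero hw' hv hys hfy).symm)

lemma exists_apex_of_two_zeros [FiniteDimensional ℝ V] (hV : Module.finrank ℝ V = 2)
    {f : V →ᵃ[ℝ] ℝ} (hf : f.linear ≠ 0) {u v w x y : V}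
    (hnc : ¬ Collinear ℝ {u, v, w}) (hnn : ∀ p ∈ ({u, v, w} : Set V), 0 ≤ f p)
    (hx : x ∈ convexHull ℝ {u, v, w}) (hy : y ∈ convexHull ℝ {u, v, w}) (hxy : x ≠ y)
    (hfx : f x = 0) (hfy : f y = 0) :
    ∃ P A B, ({u, v, w} : Set V) = {P, A, B} ∧ 0 < f P ∧ f A = 0 ∧ f B = 0 ∧
      x ∈ segment ℝ A B ∧ y ∈ segment ℝ A B := by
  have hpos : 0 < f u ∨ 0 < f v ∨ 0 < f w := by
    by_contra! h
    refine hnc (collinear_of_forall_eq_zero hV hf ?_)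
    rintro p (rfl | rfl | rfl) <;> [exact h.1.antisymm (hnn _ (by simp));
      exact h.2.1.antisymm (hnn _ (by simp)); exact h.2.2.antisymm (hnn _ (by simp))]
  rcases hpos with h | h | h
  · exact ⟨u, v, w, rfl, h,
      apex_of_two_zeros h (hnn _ (by simp)) (hnn _ (by simp)) hx hy hxy hfx hfy⟩
  · rw [insert_comm] at hx hy hnn ⊢
    exact ⟨v, u, w, rfl, h,
      apex_of_two_zeros h (hnn _ (by simp)) (hnn _ (by simp)) hx hy hxy hfx hfy⟩
  · rw [pair_comm v w, insert_comm] at hx hy hnn ⊢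
    exact ⟨w, u, v, rfl, h,
      apex_of_two_zeros h (hnn _ (by simp)) (hnn _ (by simp)) hx hy hxy hfx hfy⟩

lemma apply_ne_zero_of_mem_segment {f : V →ᵃ[ℝ] ℝ} {p q z : V} (h : 0 < f p * f q)
    (hz : z ∈ segment ℝ p q) : f z ≠ 0 := by
  rcases mul_pos_iff.1 h with ⟨hp, hq⟩ | ⟨hp, hq⟩
  · exact ne_of_gt (((convex_Ioi 0).affine_preimage f).segment_subset hp hq hz)
  · exact ne_of_lt (((convex_Iio 0).affine_preimage f).segment_subset hp hq hz)

lemma exists_lineMap_eq [FiniteDimensional ℝ V] (hV : Module.finrank ℝ V = 2)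
    {f : V →ᵃ[ℝ] ℝ} (hf : f.linear ≠ 0) {x y z : V} (hxy : x ≠ y) (hfx : f x = 0)
    (hfy : f y = 0) (hfz : f z = 0) : ∃ t : ℝ, lineMap x y t = z := by
  have hcol : Collinear ℝ {x, y, z} := by
    refine collinear_of_forall_eq_zero hV hf ?_
    rintro p (rfl | rfl | rfl) <;> assumption
  exact mem_affineSpan_pair_iff_exists_lineMap_eq.1
    (hcol.mem_affineSpan_of_mem_of_ne (by simp) (by simp) (by simp) hxy)

lemma mem_uIcc_of_lineMap_mem_segment {x y : V} (hxy : x ≠ y) {a b t : ℝ}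
    (h : lineMap x y t ∈ segment ℝ (lineMap x y a) (lineMap x y b)) :
    t ∈ uIcc a b := by
  rwa [← image_segment, (AffineMap.lineMap_injective ℝ hxy).mem_set_image, segment_eq_uIcc] at h

lemma exists_apex_lineMap_of_two_zeros [FiniteDimensional ℝ V] (hV : Module.finrank ℝ V = 2)
    {f : V →ᵃ[ℝ] ℝ} (hf : f.linear ≠ 0) {u v w x y : V}
    (hnc : ¬ Collinear ℝ {u, v, w}) (hnn : ∀ p ∈ ({u, v, w} : Set V), 0 ≤ f p)
    (hx : x ∈ convexHull ℝ {u, v, w}) (hy : y ∈ convexHull ℝ {u, v, w}) (hxy : x ≠ y)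
    (hfx : f x = 0) (hfy : f y = 0) :
    ∃ (P : V) (a b : ℝ), a ≤ 0 ∧ 1 ≤ b ∧ 0 < f P ∧
      ({u, v, w} : Set V) = {P, lineMap x y a, lineMap x y b} := by
  obtain ⟨P, A, B, hs, hP, hA, hB, hxAB, hyAB⟩ :=
    exists_apex_of_two_zeros hV hf hnc hnn hx hy hxy hfx hfy
  obtain ⟨a, rfl⟩ := exists_lineMap_eq hV hf hxy hfx hfy hA
  obtain ⟨b, rfl⟩ := exists_lineMap_eq hV hf hxy hfx hfy hB
  have h0 := mem_uIcc_of_lineMap_mem_segment hxy (t := 0) (by simpa using hxAB)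
  have h1 := mem_uIcc_of_lineMap_mem_segment hxy (t := 1) (by simpa using hyAB)
  rcases le_total a b with hab | hab
  · rw [uIcc_of_le hab] at h0 h1
    exact ⟨P, a, b, h0.1, h1.2, hP, hs⟩
  · rw [uIcc_of_ge hab] at h0 h1
    exact ⟨P, b, a, h0.1, h1.2, hP, by rw [hs, pair_comm]⟩

end AffineFunctional

section Topology

variable {V : Type*} [AddCommGroup V] [Module ℝ V] [TopologicalSpace V]
  [IsTopologicalAddGroup V] [ContinuousSMul ℝ V]

lemma pos_of_nonneg_on_isOpen {f : V →ᵃ[ℝ] ℝ} (hf : f.linear ≠ 0) {U : Set V} (hU : IsOpen U)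
    (hnn : ∀ p ∈ U, 0 ≤ f p) {z : V} (hz : z ∈ U) : 0 < f z := by
  have hopen : IsOpenMap f := AffineMap.isOpenMap_linear_iff.1
    (f.linear.isOpenMap_of_finiteDimensional (LinearMap.surjective_of_ne_zero hf))
  have hsub : f '' U ⊆ interior (Ici 0) := interior_maximal (image_subset_iff.2 hnn) (hopen U hU)
  have := hsub (mem_image_of_mem f hz)
  rwa [interior_Ici] at this

end Topology

namespace Line2

def eval (ℓ : Line2) : ℝ × ℝ →ᵃ[ℝ] ℝ where
  toFun p := ℓ.a * p.1 + ℓ.b * p.2 - ℓ.c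
  linear := ℓ.a • LinearMap.fst ℝ ℝ ℝ + ℓ.b • LinearMap.snd ℝ ℝ ℝ
  map_vadd' p v := by simp; ring

lemma mem_carrier_iff (ℓ : Line2) {p : ℝ × ℝ} : p ∈ ℓ.carrier ↔ ℓ.eval p = 0 :=
  sub_eq_zero.symm

lemma eval_linear_ne_zero (ℓ : Line2) : ℓ.eval.linear ≠ 0 := by
  intro h
  have h₁ := LinearMap.congr_fun h (1, 0)
  have h₂ := LinearMap.congr_fun h (0, 1)
  simp only [eval, LinearMap.add_apply, LinearMap.smul_apply, LinearMap.fst_apply,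
    LinearMap.snd_apply, smul_eq_mul, LinearMap.zero_apply] at h₁ h₂
  exact ℓ.nondeg (by simp_all)

lemma isClosed_carrier (ℓ : Line2) : IsClosed ℓ.carrier := by
  have : ℓ.carrier = ℓ.eval ⁻¹' {0} := by ext; exact ℓ.mem_carrier_iff
  exact this ▸ isClosed_singleton.preimage ℓ.eval.continuous_of_finiteDimensional

lemma lineMap_mem_carrier (ℓ : Line2) {x y : ℝ × ℝ} (hx : x ∈ ℓ.carrier) (hy : y ∈ ℓ.carrier)
    (t : ℝ) : lineMap x y t ∈ ℓ.carrier := by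
  rw [mem_carrier_iff] at *
  simp [AffineMap.apply_lineMap, hx, hy]

lemma exists_mem_carrier_of_ne {u v : ℝ × ℝ} (h : u ≠ v) :
    ∃ ℓ : Line2, u ∈ ℓ.carrier ∧ v ∈ ℓ.carrier := by
  refine ⟨⟨v.2 - u.2, u.1 - v.1, (v.2 - u.2) * u.1 + (u.1 - v.1) * u.2, ?_⟩, ?_, ?_⟩
  · intro h'
    simp only [Prod.mk.injEq, sub_eq_zero] at h'
    exact h (Prod.ext h'.2 h'.1.symm)
  · rfl
  · simp only [carrier, mem_ofPred_eq]
    ring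

lemma parallel_of_mem_carrier {ℓ₁ ℓ₂ : Line2} {p q : ℝ × ℝ} (hpq : p ≠ q)
    (h₁p : p ∈ ℓ₁.carrier) (h₁q : q ∈ ℓ₁.carrier) (h₂p : p ∈ ℓ₂.carrier) (h₂q : q ∈ ℓ₂.carrier) :
    ℓ₁.Parallel ℓ₂ := by
  simp only [carrier, mem_ofPred_eq] at h₁p h₁q h₂p h₂q
  by_contra h
  have hd : ℓ₁.a * ℓ₂.b - ℓ₂.a * ℓ₁.b ≠ 0 := sub_ne_zero.2 h
  refine hpq (Prod.ext (sub_eq_zero.1 ((mul_eq_zero.1 ?_).resolve_left hd))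
    (sub_eq_zero.1 ((mul_eq_zero.1 ?_).resolve_left hd)))
  · linear_combination ℓ₂.b * h₁p - ℓ₂.b * h₁q - ℓ₁.b * h₂p + ℓ₁.b * h₂q
  · linear_combination -ℓ₂.a * h₁p + ℓ₂.a * h₁q + ℓ₁.a * h₂p - ℓ₁.a * h₂q

end Line2

namespace IsSimpleArrangement

variable {L : Finset Line2}

lemma eq_of_mem_carrier (hL : IsSimpleArrangement L) {ℓ₁ ℓ₂ : Line2} (h₁ : ℓ₁ ∈ L) (h₂ : ℓ₂ ∈ L)
    {p q : ℝ × ℝ} (hpq : p ≠ q) (h₁p : p ∈ ℓ₁.carrier) (h₁q : q ∈ ℓ₁.carrier)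
    (h₂p : p ∈ ℓ₂.carrier) (h₂q : q ∈ ℓ₂.carrier) : ℓ₁ = ℓ₂ := by
  by_contra hne
  exact hL.1 ℓ₁ h₁ ℓ₂ h₂ hne (Line2.parallel_of_mem_carrier hpq h₁p h₁q h₂p h₂q)

lemma eq_of_concurrent (hL : IsSimpleArrangement L) {ℓ m₁ m₂ : Line2} (hℓ : ℓ ∈ L)
    (h₁ : m₁ ∈ L) (h₂ : m₂ ∈ L) (h₁ℓ : m₁ ≠ ℓ) (h₂ℓ : m₂ ≠ ℓ) {p : ℝ × ℝ} (hp : p ∈ ℓ.carrier)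
    (hp₁ : p ∈ m₁.carrier) (hp₂ : p ∈ m₂.carrier) : m₁ = m₂ := by
  by_contra hne
  exact hL.2 ℓ hℓ m₁ h₁ m₂ h₂ h₁ℓ.symm h₂ℓ.symm hne p ⟨hp, hp₁, hp₂⟩

lemma false_of_lines_through_two_apexes (hL : IsSimpleArrangement L) {ℓ : Line2} (hℓ : ℓ ∈ L)
    {A B P Q : ℝ × ℝ} (hA : A ∈ ℓ.carrier) (hB : B ∈ ℓ.carrier) (hAB : A ≠ B)
    (hP : P ∉ ℓ.carrier) (hQ : Q ∉ ℓ.carrier) (hPQ : P ≠ Q)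
    (hPA : ∃ m ∈ L, P ∈ m.carrier ∧ A ∈ m.carrier) (hQA : ∃ m ∈ L, Q ∈ m.carrier ∧ A ∈ m.carrier)
    (hPB : ∃ m ∈ L, P ∈ m.carrier ∧ B ∈ m.carrier) (hQB : ∃ m ∈ L, Q ∈ m.carrier ∧ B ∈ m.carrier) :
    False := by
  obtain ⟨m₁, hm₁, hPm₁, hAm₁⟩ := hPA
  obtain ⟨m₂, hm₂, hQm₂, hAm₂⟩ := hQA
  obtain ⟨n₁, hn₁, hPn₁, hBn₁⟩ := hPB
  obtain ⟨n₂, hn₂, hQn₂, hBn₂⟩ := hQB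
  have hne : ∀ {m : Line2} {R : ℝ × ℝ}, R ∉ ℓ.carrier → R ∈ m.carrier → m ≠ ℓ :=
    fun hR hRm h => hR (h ▸ hRm)
  obtain rfl : m₁ = m₂ := hL.eq_of_concurrent hℓ hm₁ hm₂ (hne hP hPm₁) (hne hQ hQm₂) hA hAm₁ hAm₂
  obtain rfl : n₁ = n₂ := hL.eq_of_concurrent hℓ hn₁ hn₂ (hne hP hPn₁) (hne hQ hQn₂) hB hBn₁ hBn₂
  obtain rfl : m₁ = n₁ := hL.eq_of_mem_carrier hm₁ hn₁ hPQ hPm₁ hQm₂ hPn₁ hQn₂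
  exact hne hP hPm₁ (hL.eq_of_mem_carrier hm₁ hℓ hAB hAm₁ hBn₁ hA hB)

end IsSimpleArrangement

namespace IsCellOf

variable {S C C₁ C₂ : Set (ℝ × ℝ)}

lemma isOpen (hS : IsClosed S) (hC : IsCellOf S C) : IsOpen C := by
  obtain ⟨x, -, rfl⟩ := hC
  exact hS.isOpen_compl.connectedComponentIn

lemma subset_compl (hC : IsCellOf S C) : C ⊆ Sᶜ := by
  obtain ⟨x, -, rfl⟩ := hC
  exact connectedComponentIn_subset _ _

lemma isPreconnected (hC : IsCellOf S C) : IsPreconnected C := by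
  obtain ⟨x, -, rfl⟩ := hC
  exact isPreconnected_connectedComponentIn

lemma eq_of_mem (h₁ : IsCellOf S C₁) (h₂ : IsCellOf S C₂) {z : ℝ × ℝ} (hz₁ : z ∈ C₁)
    (hz₂ : z ∈ C₂) : C₁ = C₂ := by
  obtain ⟨x, -, rfl⟩ := h₁
  obtain ⟨y, -, rfl⟩ := h₂
  rw [connectedComponentIn_eq hz₁, connectedComponentIn_eq hz₂]

lemma mem_of_isPreconnected (hC : IsCellOf S C) {t : Set (ℝ × ℝ)} (ht : IsPreconnected t)
    (htS : t ⊆ Sᶜ) {p q : ℝ × ℝ} (hp : p ∈ t) (hpC : p ∈ C) (hq : q ∈ t) : q ∈ C := by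
  obtain ⟨x, -, rfl⟩ := hC
  rw [connectedComponentIn_eq hpC]
  exact ht.subset_connectedComponentIn hp htS hq

lemma mem_of_mem_closure (hS : IsClosed S) (hC : IsCellOf S C) {z : ℝ × ℝ}
    (hz : z ∈ closure C) (hzS : z ∉ S) : z ∈ C := by
  obtain ⟨w, hwz, hwC⟩ := mem_closure_iff.1 hz _ hS.isOpen_compl.connectedComponentIn
    (mem_connectedComponentIn hzS)
  exact eq_of_mem ⟨z, hzS, rfl⟩ hC hwz hwC ▸ mem_connectedComponentIn hzS

end IsCellOf

lemma isClosed_linesUnion (L : Finset Line2) : IsClosed (linesUnion L) :=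
  L.finite_toSet.isClosed_biUnion fun ℓ _ => ℓ.isClosed_carrier

lemma linesUnion_eq_union_erase [DecidableEq Line2] {L : Finset Line2} {ℓ : Line2}
    (hℓ : ℓ ∈ L) :
    linesUnion L = ℓ.carrier ∪ linesUnion (L.erase ℓ) := by
  rw [linesUnion, linesUnion, ← Finset.set_biUnion_insert, Finset.insert_erase hℓ]

lemma exists_mem_carrier_of_segment_subset {L : Finset Line2} {x y : ℝ × ℝ}
    (h : segment ℝ x y ⊆ linesUnion L) : ∃ ℓ ∈ L, x ∈ ℓ.carrier ∧ y ∈ ℓ.carrier := by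
  by_contra! H
  have hsub : ∀ ℓ ∈ L, {t : ℝ | lineMap x y t ∈ ℓ.carrier}.Subsingleton := by
    intro ℓ hℓ s hs t ht
    by_contra hst
    simp only [mem_ofPred_eq, ℓ.mem_carrier_iff, AffineMap.apply_lineMap,
      AffineMap.lineMap_apply_ring'] at hs ht
    have hyx : ℓ.eval y - ℓ.eval x = 0 :=
      (mul_eq_zero.1 (by linear_combination hs - ht)).resolve_left (sub_ne_zero.2 hst)
    have hx : ℓ.eval x = 0 := by linear_combination hs - s * hyx
    exact H ℓ hℓ (ℓ.mem_carrier_iff.2 hx) (ℓ.mem_carrier_iff.2 (by linear_combination hyx + hx))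
  refine Icc_infinite (zero_lt_one' ℝ)
    ((L.finite_toSet.biUnion fun ℓ hℓ => (hsub ℓ hℓ).finite).subset fun t ht => ?_)
  simpa [linesUnion] using h (segment_eq_image_lineMap ℝ x y ▸ mem_image_of_mem _ ht)

namespace IsCell

variable {L : Finset Line2} {C C₁ C₂ : Set (ℝ × ℝ)}

lemma closure_inter_closure_subset (h₁ : IsCell L C₁) (h₂ : IsCell L C₂) (hne : C₁ ≠ C₂) :
    closure C₁ ∩ closure C₂ ⊆ linesUnion L := by
  intro z ⟨hz₁, hz₂⟩
  by_contra hz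
  have hS := isClosed_linesUnion L
  exact hne (IsCellOf.eq_of_mem h₁ h₂ (IsCellOf.mem_of_mem_closure hS h₁ hz₁ hz)
    (IsCellOf.mem_of_mem_closure hS h₂ hz₂ hz))

lemma eval_pos_or_neg (hC : IsCell L C) {ℓ : Line2} (hℓ : ℓ ∈ L) :
    (∀ z ∈ C, 0 < ℓ.eval z) ∨ (∀ z ∈ C, ℓ.eval z < 0) := by
  by_contra! h
  obtain ⟨⟨p, hp, hfp⟩, q, hq, hfq⟩ := h
  obtain ⟨z, hz, hfz⟩ := (IsCellOf.isPreconnected hC).intermediate_value₂ hp hq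
    ℓ.eval.continuous_of_finiteDimensional.continuousOn continuousOn_const hfp hfq
  exact IsCellOf.subset_compl hC hz (mem_biUnion hℓ (ℓ.mem_carrier_iff.2 hfz))

lemma eval_mul_eval_nonneg (hC : IsCell L C) {m : Line2} (hm : m ∈ L) {p q : ℝ × ℝ}
    (hp : p ∈ closure C) (hq : q ∈ closure C) : 0 ≤ m.eval p * m.eval q := by
  have hcont := m.eval.continuous_of_finiteDimensional
  rcases hC.eval_pos_or_neg hm with h | h
  · have hcl : closure C ⊆ {z | 0 ≤ m.eval z} :=
      closure_minimal (fun z hz => (h z hz).le) (isClosed_le continuous_const hcont)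
    exact mul_nonneg (hcl hp) (hcl hq)
  · have hcl : closure C ⊆ {z | m.eval z ≤ 0} :=
      closure_minimal (fun z hz => (h z hz).le) (isClosed_le hcont continuous_const)
    exact mul_nonneg_of_nonpos_of_nonpos (hcl hp) (hcl hq)

lemma mem_carrier_of_mem_openSegment (hC : IsCell L C) {m : Line2} (hm : m ∈ L)
    {p q V : ℝ × ℝ} (hp : p ∈ closure C) (hq : q ∈ closure C) (hV : V ∈ openSegment ℝ p q)
    (hVm : V ∈ m.carrier) : p ∈ m.carrier ∧ q ∈ m.carrier := by
  have hpq := hC.eval_mul_eval_nonneg hm hp hq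
  obtain ⟨a, b, ha, hb, hab, rfl⟩ := hV
  rw [m.mem_carrier_iff, Convex.combo_affine_apply hab, smul_eq_mul, smul_eq_mul] at hVm
  rw [m.mem_carrier_iff, m.mem_carrier_iff]
  have hp' : a * m.eval p ^ 2 + b * (m.eval p * m.eval q) = 0 := by
    linear_combination m.eval p * hVm
  have hq' : b * m.eval q ^ 2 + a * (m.eval p * m.eval q) = 0 := by
    linear_combination m.eval q * hVm
  constructor
  · refine pow_eq_zero_iff two_ne_zero |>.1 ((mul_eq_zero.1 ?_).resolve_left ha.ne')
    linarith [mul_nonneg hb.le hpq, mul_nonneg ha.le (sq_nonneg (m.eval p))]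
  · refine pow_eq_zero_iff two_ne_zero |>.1 ((mul_eq_zero.1 ?_).resolve_left hb.ne')
    linarith [mul_nonneg ha.le hpq, mul_nonneg hb.le (sq_nonneg (m.eval q))]

lemma segment_subset_linesUnion (hC : IsCell L C) {u v w : ℝ × ℝ}
    (hnc : ¬ Collinear ℝ {u, v, w}) (hT : closure C = convexHull ℝ {u, v, w}) :
    segment ℝ u v ⊆ linesUnion L := by
  obtain ⟨m, hum, hvm⟩ := Line2.exists_mem_carrier_of_ne (ne₁₂_of_not_collinear hnc)
  rw [m.mem_carrier_iff] at hum hvm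
  have hwm : m.eval w ≠ 0 := fun hwm => hnc <| collinear_of_forall_eq_zero (by simp)
    m.eval_linear_ne_zero (by rintro p (rfl | rfl | rfl) <;> assumption)
  obtain ⟨g, hg, hgu, hgv, hgw⟩ :
      ∃ g : ℝ × ℝ →ᵃ[ℝ] ℝ, g.linear ≠ 0 ∧ g u = 0 ∧ g v = 0 ∧ 0 < g w := by
    rcases hwm.lt_or_gt with h | h
    · exact ⟨-m.eval, by simpa using m.eval_linear_ne_zero, by simpa, by simpa, by simpa⟩
    · exact ⟨m.eval, m.eval_linear_ne_zero, hum, hvm, h⟩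
  have hCg : ∀ z ∈ C, 0 ≤ g z := fun z hz => by
    refine convexHull_min ?_ ((convex_Ici 0).affine_preimage g) (hT ▸ subset_closure hz)
    rintro p (rfl | rfl | rfl) <;> simp [hgu, hgv, hgw.le]
  intro z hz
  by_contra hzL
  have hzC : z ∈ C := IsCellOf.mem_of_mem_closure (isClosed_linesUnion L) hC
    (hT ▸ segment_subset_convexHull (by simp) (by simp) hz) hzL
  have hgz : g z = 0 := ((convex_singleton 0).affine_preimage g).segment_subset hgu hgv hz
  exact (pos_of_nonneg_on_isOpen hg (IsCellOf.isOpen (isClosed_linesUnion L) hC) hCg hzC).ne'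
    hgz

lemma exists_mem_carrier_of_triangle (hC : IsCell L C) {u v w : ℝ × ℝ}
    (hnc : ¬ Collinear ℝ {u, v, w}) (hT : closure C = convexHull ℝ {u, v, w}) :
    ∃ m ∈ L, u ∈ m.carrier ∧ v ∈ m.carrier :=
  exists_mem_carrier_of_segment_subset (hC.segment_subset_linesUnion hnc hT)

lemma eq_of_same_side (hL : IsSimpleArrangement L) {ℓ : Line2} (hℓ : ℓ ∈ L)
    (h₁ : IsCell L C₁) (h₂ : IsCell L C₂) {x y : ℝ × ℝ} (hxy : x ≠ y) (hx : x ∈ ℓ.carrier)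
    (hy : y ∈ ℓ.carrier) (hseg : segment ℝ x y ⊆ closure C₁ ∩ closure C₂)
    (hside : ∀ p ∈ C₁, ∀ q ∈ C₂, 0 < ℓ.eval p * ℓ.eval q) : C₁ = C₂ := by
  classical
  obtain ⟨z, hz, hzL⟩ : ∃ z ∈ segment ℝ x y, z ∉ linesUnion (L.erase ℓ) := by
    by_contra! h
    obtain ⟨m, hm, hxm, hym⟩ := exists_mem_carrier_of_segment_subset h
    exact Finset.ne_of_mem_erase hm
      (hL.eq_of_mem_carrier (Finset.mem_of_mem_erase hm) hℓ hxy hxm hym hx hy)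
  obtain ⟨ε, hε, hball⟩ := Metric.isOpen_iff.1 (isClosed_linesUnion _).isOpen_compl z hzL
  obtain ⟨p, hpB, hp⟩ :=
    mem_closure_iff.1 (hseg hz).1 _ Metric.isOpen_ball (Metric.mem_ball_self hε)
  obtain ⟨q, hqB, hq⟩ :=
    mem_closure_iff.1 (hseg hz).2 _ Metric.isOpen_ball (Metric.mem_ball_self hε)
  -- near `z` the only line of `L` is `ℓ`, and `ℓ` does not separate `p` from `q`
  have hpq : segment ℝ p q ⊆ (linesUnion L)ᶜ := by
    intro r hr
    rw [linesUnion_eq_union_erase hℓ, compl_union]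
    exact ⟨ℓ.mem_carrier_iff.not.2 (apply_ne_zero_of_mem_segment (hside p hp q hq) hr),
      hball ((convex_ball z ε).segment_subset hpB hqB hr)⟩
  have hqC₁ := IsCellOf.mem_of_isPreconnected h₁ (convex_segment p q).isPreconnected hpq
    (left_mem_segment ℝ p q) hp (right_mem_segment ℝ p q)
  exact IsCellOf.eq_of_mem h₁ h₂ hqC₁ hq

/-- `P`, `lineMap x y a` and `lineMap x y b` are the vertices of `closure C`, with `P` the apex
off the line `f = 0`. -/
lemma exists_apex (hC : IsCell L C) (hT : IsTriangleSet (closure C)) {f : ℝ × ℝ →ᵃ[ℝ] ℝ}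
    (hf : f.linear ≠ 0) (hCf : ∀ z ∈ C, 0 < f z) {x y : ℝ × ℝ} (hxy : x ≠ y)
    (hx : x ∈ closure C) (hy : y ∈ closure C) (hfx : f x = 0) (hfy : f y = 0) :
    ∃ (P : ℝ × ℝ) (a b : ℝ), a ≤ 0 ∧ 1 ≤ b ∧ 0 < f P ∧
      lineMap x y a ∈ closure C ∧ lineMap x y b ∈ closure C ∧
      (∃ m ∈ L, P ∈ m.carrier ∧ lineMap x y a ∈ m.carrier) ∧
      (∃ m ∈ L, P ∈ m.carrier ∧ lineMap x y b ∈ m.carrier) := by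
  obtain ⟨u, v, w, hnc, hT⟩ := hT
  have hcl : closure C ⊆ {z | 0 ≤ f z} := closure_minimal (fun z hz => (hCf z hz).le)
    (isClosed_le continuous_const f.continuous_of_finiteDimensional)
  obtain ⟨P, a, b, ha, hb, hP, hs⟩ := exists_apex_lineMap_of_two_zeros (by simp) hf hnc
    (fun p hp => hcl (hT ▸ subset_convexHull ℝ _ hp)) (hT ▸ hx) (hT ▸ hy) hxy hfx hfy
  rw [hs] at hnc hT
  refine ⟨P, a, b, ha, hb, hP, hT ▸ subset_convexHull ℝ _ (by simp),
    hT ▸ subset_convexHull ℝ _ (by simp), hC.exists_mem_carrier_of_triangle hnc hT, ?_⟩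
  rw [pair_comm] at hnc hT
  exact hC.exists_mem_carrier_of_triangle hnc hT

lemma false_of_line_crossing (hL : IsSimpleArrangement L) {ℓ : Line2} (hℓ : ℓ ∈ L)
    (hC : IsCell L C) {x y : ℝ × ℝ} (hxy : x ≠ y) (hx : x ∈ ℓ.carrier) (hy : y ∈ ℓ.carrier)
    {R : ℝ × ℝ} (hR : R ∉ ℓ.carrier) {s t τ : ℝ}
    (hRτ : ∃ m ∈ L, R ∈ m.carrier ∧ lineMap x y τ ∈ m.carrier)
    (hs : lineMap x y s ∈ closure C) (ht : lineMap x y t ∈ closure C)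
    (hsτ : s < τ) (hτt : τ < t) : False := by
  obtain ⟨m, hm, hRm, hτm⟩ := hRτ
  have hV : lineMap x y τ ∈ openSegment ℝ (lineMap x y s) (lineMap x y t) := by
    rw [← image_openSegment, openSegment_eq_Ioo (hsτ.trans hτt)]
    exact mem_image_of_mem _ ⟨hsτ, hτt⟩
  obtain ⟨hsm, htm⟩ := hC.mem_carrier_of_mem_openSegment hm hs ht hV hτm
  have hmℓ := hL.eq_of_mem_carrier hm hℓ
    ((AffineMap.lineMap_injective ℝ hxy).ne (hsτ.trans hτt).ne) hsm htm
    (ℓ.lineMap_mem_carrier hx hy s) (ℓ.lineMap_mem_carrier hx hy t)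
  exact hR (hmℓ ▸ hRm)

end IsCell

lemma false_of_opposite_sides {L : Finset Line2} (hL : IsSimpleArrangement L) {ℓ : Line2}
    (hℓ : ℓ ∈ L) {C₁ C₂ : Set (ℝ × ℝ)} (h₁ : IsCell L C₁) (h₂ : IsCell L C₂)
    (hT₁ : IsTriangleSet (closure C₁)) (hT₂ : IsTriangleSet (closure C₂)) {x y : ℝ × ℝ}
    (hxy : x ≠ y) (hx : x ∈ ℓ.carrier) (hy : y ∈ ℓ.carrier)
    (hseg : segment ℝ x y ⊆ closure C₁ ∩ closure C₂)
    (hs₁ : ∀ z ∈ C₁, 0 < ℓ.eval z) (hs₂ : ∀ z ∈ C₂, ℓ.eval z < 0) : False := by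
  have hx' := hseg (left_mem_segment ℝ x y)
  have hy' := hseg (right_mem_segment ℝ x y)
  have hfx := ℓ.mem_carrier_iff.1 hx
  have hfy := ℓ.mem_carrier_iff.1 hy
  obtain ⟨P, a₁, b₁, ha₁, hb₁, hP, ha₁C, hb₁C, hPa₁, hPb₁⟩ :=
    h₁.exists_apex hT₁ ℓ.eval_linear_ne_zero hs₁ hxy hx'.1 hy'.1 hfx hfy
  obtain ⟨Q, a₂, b₂, ha₂, hb₂, hQ, ha₂C, hb₂C, hQa₂, hQb₂⟩ :=
    h₂.exists_apex hT₂ (f := -ℓ.eval) (by simpa using ℓ.eval_linear_ne_zero)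
      (by simpa using hs₂) hxy hx'.2 hy'.2 (by simpa) (by simpa)
  rw [AffineMap.coe_neg, Pi.neg_apply, neg_pos] at hQ
  have hPℓ : P ∉ ℓ.carrier := by rw [ℓ.mem_carrier_iff]; exact hP.ne'
  have hQℓ : Q ∉ ℓ.carrier := by rw [ℓ.mem_carrier_iff]; exact hQ.ne
  obtain rfl : a₁ = a₂ := le_antisymm
    (not_lt.1 fun h => h₂.false_of_line_crossing hL hℓ hxy hx hy hPℓ hPa₁ ha₂C hb₂C h
      (by linarith))
    (not_lt.1 fun h => h₁.false_of_line_crossing hL hℓ hxy hx hy hQℓ hQa₂ ha₁C hb₁C h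
      (by linarith))
  obtain rfl : b₁ = b₂ := le_antisymm
    (not_lt.1 fun h => h₁.false_of_line_crossing hL hℓ hxy hx hy hQℓ hQb₂ ha₁C hb₁C
      (by linarith) h)
    (not_lt.1 fun h => h₂.false_of_line_crossing hL hℓ hxy hx hy hPℓ hPb₁ ha₂C hb₂C
      (by linarith) h)
  exact hL.false_of_lines_through_two_apexes hℓ (ℓ.lineMap_mem_carrier hx hy a₁)
    (ℓ.lineMap_mem_carrier hx hy b₁) ((AffineMap.lineMap_injective ℝ hxy).ne (by linarith))
    hPℓ hQℓ (fun h => (h ▸ hP).not_gt hQ) hPa₁ hQa₂ hPb₁ hQb₂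

/-- In a simple arrangement of lines, no two distinct triangular bounded cells
share a common edge: their closures cannot intersect in a nondegenerate
segment. -/
theorem stmt9 (L : Finset Line2) (hL : IsSimpleArrangement L) :
    ¬ ∃ C₁ C₂ : Set (ℝ × ℝ), IsCell L C₁ ∧ IsCell L C₂ ∧ C₁ ≠ C₂ ∧
      Bornology.IsBounded C₁ ∧ Bornology.IsBounded C₂ ∧
      IsTriangleSet (closure C₁) ∧ IsTriangleSet (closure C₂) ∧
      ∃ x y : ℝ × ℝ, x ≠ y ∧ segment ℝ x y ⊆ closure C₁ ∩ closure C₂ := by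
  rintro ⟨C₁, C₂, h₁, h₂, hne, -, -, hT₁, hT₂, x, y, hxy, hseg⟩
  obtain ⟨ℓ, hℓ, hx, hy⟩ := exists_mem_carrier_of_segment_subset
    (hseg.trans (h₁.closure_inter_closure_subset h₂ hne))
  rcases h₁.eval_pos_or_neg hℓ with hs₁ | hs₁ <;> rcases h₂.eval_pos_or_neg hℓ with hs₂ | hs₂
  · exact hne (h₁.eq_of_same_side hL hℓ h₂ hxy hx hy hseg
      fun p hp q hq => mul_pos (hs₁ p hp) (hs₂ q hq))
  · exact false_of_opposite_sides hL hℓ h₁ h₂ hT₁ hT₂ hxy hx hy hseg hs₁ hs₂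
  · exact false_of_opposite_sides hL hℓ h₂ h₁ hT₂ hT₁ hxy hx hy (inter_comm _ _ ▸ hseg) hs₂
      hs₁
  · exact hne (h₁.eq_of_same_side hL hℓ h₂ hxy hx hy hseg
      fun p hp q hq => mul_pos_of_neg_of_neg (hs₁ p hp) (hs₂ q hq))
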